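/- Let Γ be a group and c a cocycle for the left regular representation. Let T be the densely defined unbounded operator (LinearPMap) from ℓ²(Γ) to ℓ²(Γ×Γ) whose domain is the subspace of finitely supported functions and which sends the indicator of g to δ_c(g), extended linearly: T(f) = ∑_g f(g)·δ_c(g). Then T is closable, i.e. the closure of the graph of T is again the graph of a linear partial map. (This is the paper's assertion, in its section on group cocycles, that the derivation δ_c is always closable as an unbounded operator L²(L(Γ)) → L²(L(Γ)⊗L(Γ)).) -/
import Mathlib


open scoped ENNReal

theorem delta_memℓp {Γ : Type*} [Group Γ] [DecidableEq Γ]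
    (c : Γ → lp (fun _ : Γ => ℂ) 2) (g : Γ) :
    Memℓp (fun p : Γ × Γ => c g p.1 * (if p.1 * p.2 = g then 1 else 0)) 2 := by
  apply memℓp_gen
  have hinj : Function.Injective (fun a : Γ => ((a, a⁻¹ * g) : Γ × Γ)) := by
    intro a b hab
    simpa using congrArg Prod.fst hab
  have hvan : ∀ p : Γ × Γ, p ∉ Set.range (fun a : Γ => ((a, a⁻¹ * g) : Γ × Γ)) →
      ‖c g p.1 * (if p.1 * p.2 = g then (1:ℂ) else 0)‖ ^ (2 : ℝ≥0∞).toReal = 0 := by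
    intro p hp
    rw [if_neg, mul_zero, norm_zero, Real.zero_rpow (by norm_num)]
    intro hpg
    exact hp ⟨p.1, by simp [← hpg]⟩
  rw [← Function.Injective.summable_iff hinj hvan]
  have hsum : Summable fun a : Γ => ‖c g a‖ ^ (2 : ℝ≥0∞).toReal :=
    (lp.memℓp (c g)).summable (by norm_num)
  apply hsum.congr
  intro a
  simp [Function.comp, mul_inv_cancel_left]

noncomputable def delta {Γ : Type*} [Group Γ] [DecidableEq Γ]
    (c : Γ → lp (fun _ : Γ => ℂ) 2) (g : Γ) : lp (fun _ : Γ × Γ => ℂ) 2 :=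
  ⟨fun p : Γ × Γ => c g p.1 * (if p.1 * p.2 = g then 1 else 0), delta_memℓp c g⟩

noncomputable def finSupported (Γ : Type*) [Group Γ] : Submodule ℂ (lp (fun _ : Γ => ℂ) 2) where
  carrier := {f | (Function.support fun x => f x).Finite}
  add_mem' := by
    intro f g hf hg
    refine Set.Finite.subset (hf.union hg) ?_
    intro x hx
    simp only [Function.mem_support, Set.mem_union] at hx ⊢
    by_contra hcon
    push_neg at hcon
    apply hx
    have h : (⇑(f + g) : ∀ _ : Γ, ℂ) = ⇑f + ⇑g := lp.coeFn_add f g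
    rw [h]
    simp [hcon.1, hcon.2]
  zero_mem' := by
    have h : (⇑(0 : lp (fun _ : Γ => ℂ) 2) : ∀ _ : Γ, ℂ) = 0 := lp.coeFn_zero _ _
    simp only [Set.mem_setOf_eq, h]
    simp
  smul_mem' := by
    intro a f hf
    refine Set.Finite.subset hf ?_
    intro x hx
    simp only [Function.mem_support] at hx ⊢
    intro h0
    apply hx
    have h : (⇑(a • f) : ∀ _ : Γ, ℂ) = a • ⇑f := lp.coeFn_smul a f
    rw [h]
    simp [h0]

theorem support_smul_delta {Γ : Type*} [Group Γ] [DecidableEq Γ]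
    (c : Γ → lp (fun _ : Γ => ℂ) 2) (u : lp (fun _ : Γ => ℂ) 2) :
    (Function.support fun g => u g • delta c g) ⊆ Function.support fun g => u g := by
  intro g hg
  rw [Function.mem_support] at hg ⊢
  intro h0
  exact hg (by rw [h0, zero_smul])

/-- The unbounded operator `T : ℓ²(Γ) →ₗ. ℓ²(Γ×Γ)` with domain the finitely supported
functions, sending the indicator of `g` to `δ_c(g)`:  `T(f) = ∑_g f(g)·δ_c(g)`. -/
noncomputable def cocycleDerivation {Γ : Type*} [Group Γ] [DecidableEq Γ]
    (c : Γ → lp (fun _ : Γ => ℂ) 2) :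
    lp (fun _ : Γ => ℂ) 2 →ₗ.[ℂ] lp (fun _ : Γ × Γ => ℂ) 2 where
  domain := finSupported Γ
  toFun :=
  { toFun := fun f => ∑ᶠ g : Γ, (f : lp (fun _ : Γ => ℂ) 2) g • delta c g
    map_add' := by
      intro f f'
      have hf : (Function.support fun g =>
          ((f : lp (fun _ : Γ => ℂ) 2)) g • delta c g).Finite :=
        Set.Finite.subset f.2 (support_smul_delta c _)
      have hf' : (Function.support fun g =>
          ((f' : lp (fun _ : Γ => ℂ) 2)) g • delta c g).Finite :=
        Set.Finite.subset f'.2 (support_smul_delta c _)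
      have h1 : ∀ g : Γ, ((↑(f + f') : lp (fun _ : Γ => ℂ) 2)) g • delta c g
          = (f : lp (fun _ : Γ => ℂ) 2) g • delta c g
            + (f' : lp (fun _ : Γ => ℂ) 2) g • delta c g := by
        intro g
        have h2 : ((↑(f + f') : lp (fun _ : Γ => ℂ) 2)) g
            = (f : lp (fun _ : Γ => ℂ) 2) g + (f' : lp (fun _ : Γ => ℂ) 2) g := by
          have h3 : ((↑(f + f') : lp (fun _ : Γ => ℂ) 2))
              = (↑f : lp (fun _ : Γ => ℂ) 2) + ↑f' := rfl
          rw [h3, lp.coeFn_add]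
          rfl
        rw [h2, add_smul]
      show (∑ᶠ g : Γ, ((↑(f + f') : lp (fun _ : Γ => ℂ) 2)) g • delta c g)
          = (∑ᶠ g : Γ, ((f : lp (fun _ : Γ => ℂ) 2)) g • delta c g)
            + ∑ᶠ g : Γ, ((f' : lp (fun _ : Γ => ℂ) 2)) g • delta c g
      rw [finsum_congr h1, finsum_add_distrib hf hf']
    map_smul' := by
      intro a f
      have hf : (Function.support fun g =>
          ((f : lp (fun _ : Γ => ℂ) 2)) g • delta c g).Finite :=
        Set.Finite.subset f.2 (support_smul_delta c _)
      have h1 : ∀ g : Γ, ((↑(a • f) : lp (fun _ : Γ => ℂ) 2)) g • delta c g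
          = a • ((f : lp (fun _ : Γ => ℂ) 2) g • delta c g) := by
        intro g
        have h2 : ((↑(a • f) : lp (fun _ : Γ => ℂ) 2)) g
            = a • (f : lp (fun _ : Γ => ℂ) 2) g := by
          have h3 : ((↑(a • f) : lp (fun _ : Γ => ℂ) 2))
              = a • (↑f : lp (fun _ : Γ => ℂ) 2) := rfl
          rw [h3, lp.coeFn_smul]
          rfl
        rw [h2, smul_assoc]
      show (∑ᶠ g : Γ, ((↑(a • f) : lp (fun _ : Γ => ℂ) 2)) g • delta c g)
          = (RingHom.id ℂ) a • ∑ᶠ g : Γ, ((f : lp (fun _ : Γ => ℂ) 2)) g • delta c g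
      rw [finsum_congr h1, ← smul_finsum' a hf]
      rfl }

/-- For a cocycle `c` for the left regular representation, the densely defined unbounded
operator `T : ℓ²(Γ) → ℓ²(Γ×Γ)` with domain the finitely supported functions and
`T(f) = ∑_g f(g)·δ_c(g)` is closable: the closure of its graph is again the graph of a linear
partial map.  (The derivation `δ_c` is always closable as an unbounded operator
`L²(L(Γ)) → L²(L(Γ) ⊗ L(Γ))`.) -/
theorem cocycleDerivation_isClosable {Γ : Type*} [Group Γ] [DecidableEq Γ]
    (c : Γ → lp (fun _ : Γ => ℂ) 2)
    (hc : ∀ g h : Γ, ∀ x : Γ, c (g * h) x = c h (g⁻¹ * x) + c g x) :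
    (cocycleDerivation c).IsClosable := by
  haveI : Fact ((1 : ℝ≥0∞) ≤ 2) := ⟨one_le_two⟩
  set T := cocycleDerivation c with hT
  -- evaluation maps are continuous
  have hev2 : ∀ p : Γ × Γ, Continuous fun v : lp (fun _ : Γ × Γ => ℂ) 2 => v p := by
    intro p
    exact (continuous_apply p).comp (lp.uniformContinuous_coe (p := 2)).continuous
  have hev1 : ∀ a : Γ, Continuous fun v : lp (fun _ : Γ => ℂ) 2 => v a := by
    intro a
    exact (continuous_apply a).comp (lp.uniformContinuous_coe (p := 2)).continuous
  -- The closed set of pairs satisfying the pointwise relation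
  set S : Set ((lp (fun _ : Γ => ℂ) 2) × lp (fun _ : Γ × Γ => ℂ) 2) :=
    ⋂ p : Γ × Γ, {x | x.2 p = c (p.1 * p.2) p.1 * x.1 (p.1 * p.2)} with hS
  have hSclosed : IsClosed S := by
    refine isClosed_iInter fun p => isClosed_eq ?_ ?_
    · exact (hev2 p).comp continuous_snd
    · exact continuous_const.mul (((hev1 (p.1 * p.2)).comp continuous_fst))
  -- the graph is contained in S
  have hgraphS : (T.graph : Set _) ⊆ S := by
    rintro x hx
    rw [SetLike.mem_coe, LinearPMap.mem_graph_iff] at hx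
    obtain ⟨f, hx1, hx2⟩ := hx
    simp only [hS, Set.mem_iInter, Set.mem_setOf_eq]
    intro p
    rw [← hx1, ← hx2]
    -- evaluation as AddMonoidHom
    have hsupp : (Function.support fun g =>
        ((f : lp (fun _ : Γ => ℂ) 2)) g • delta c g).Finite :=
      Set.Finite.subset f.2 (support_smul_delta c _)
    have hTf : T f = ∑ᶠ g : Γ, (f : lp (fun _ : Γ => ℂ) 2) g • delta c g := rfl
    set ev : lp (fun _ : Γ × Γ => ℂ) 2 →+ ℂ :=
      AddMonoidHom.mk' (fun v => v p) (fun a b => congrFun (lp.coeFn_add a b) p) with hev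
    have : (T f) p = ev (∑ᶠ g : Γ, (f : lp (fun _ : Γ => ℂ) 2) g • delta c g) := by
      rw [hTf]; rfl
    rw [this, AddMonoidHom.map_finsum ev hsupp]
    have hterm : ∀ g : Γ, ev ((f : lp (fun _ : Γ => ℂ) 2) g • delta c g)
        = (f : lp (fun _ : Γ => ℂ) 2) g * (c g p.1 * (if p.1 * p.2 = g then 1 else 0)) := by
      intro g
      show ((f : lp (fun _ : Γ => ℂ) 2) g • delta c g) p = _
      rw [lp.coeFn_smul]
      rfl
    rw [finsum_congr hterm]
    rw [finsum_eq_single _ (p.1 * p.2) (by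
      intro g hg
      rw [if_neg (fun h => hg h.symm), mul_zero, mul_zero])]
    rw [if_pos rfl, mul_one, mul_comm]
  -- closure of graph contains no nonzero element over 0
  have key : ∀ x ∈ T.graph.topologicalClosure, x.1 = 0 → x.2 = 0 := by
    intro x hx h1
    have hxS : x ∈ S := by
      have hx' : x ∈ (T.graph.topologicalClosure : Set _) := hx
      rw [Submodule.topologicalClosure_coe] at hx'
      exact closure_minimal hgraphS hSclosed hx'
    apply lp.ext
    funext p
    have := Set.mem_iInter.mp hxS p
    simp only [Set.mem_setOf_eq] at this
    have h0 : x.1 (p.1 * p.2) = 0 := by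
      rw [h1]
      exact congrFun (lp.coeFn_zero (fun _ : Γ => ℂ) 2) _
    rw [lp.coeFn_zero]
    simp only [Pi.zero_apply]
    rw [this, h0, mul_zero]
  exact ⟨_, (Submodule.toLinearPMap_graph_eq _ key).symm⟩
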